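/- Let k be a finite field of cardinality q^n, let F ⊆ k[X] be finite, and set E = F̄_f ⊆ S. Then for every h ∈ S there exists g ∈ k[X] with deg(g) < q^n such that h − ḡ ∈ V_{E, deg(h)}. -/

import Mathlib

open MvPolynomial

/-- `V_{E,d}`: the smallest `k`-subspace of the polynomial ring containing every `f ∈ E`
of total degree at most `d` and closed under multiplication by ring elements
as long as the degree stays at most `d`. -/
noncomputable def Vspace {k : Type*} [Field k] {σ : Type*} (E : Finset (MvPolynomial σ k)) (d : ℕ) :
    Submodule k (MvPolynomial σ k) :=
  sInf {W | (∀ f ∈ E, f.totalDegree ≤ d → f ∈ W) ∧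
            ∀ g ∈ W, ∀ h : MvPolynomial σ k, (g * h).totalDegree ≤ d → g * h ∈ W}

/-- The reduced exponent `e'` determined by `X^{e'} = X^e mod (X^{q^n} - X)`:
`e' = e` if `e < q^n`, and otherwise `e'` is the representative of `e` modulo `q^n - 1`
lying in `{1, …, q^n - 1}`. -/
def reduceExp (q n e : ℕ) : ℕ :=
  if e < q ^ n then e
  else if (q ^ n - 1) ∣ e then q ^ n - 1 else e % (q ^ n - 1)

/-- The exponent vector of `overline{X^e}`: the base-`q` digits of the reduced exponent. -/
noncomputable def expVec (q n e : ℕ) : Fin n →₀ ℕ :=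
  Finsupp.equivFunOnFinite.symm fun j : Fin n => reduceExp q n e / q ^ (j : ℕ) % q

/-- The fake Weil descent map `f ↦ f̄` from `k[X]` to `k[X_0, …, X_{n-1}]`, the `k`-linear
extension of `X^e ↦ overline{X^e} = X_0^{e'_0} ⋯ X_{n-1}^{e'_{n-1}}`. -/
noncomputable def fakeWeil {k : Type*} [Field k] (q n : ℕ) (f : Polynomial k) :
    MvPolynomial (Fin n) k :=
  f.sum fun e c => MvPolynomial.monomial (expVec q n e) c

/-- The fake Weil descent system `F̄_f` of a finite set `F ⊆ k[X]`:
`{f̄ : f ∈ F} ∪ {X_0^q - X_1, …, X_{n-2}^q - X_{n-1}, X_{n-1}^q - X_0}`. -/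
noncomputable def fakeWeilSystem {k : Type*} [Field k] [DecidableEq k] (q n : ℕ) [NeZero n]
    (F : Finset (Polynomial k)) : Finset (MvPolynomial (Fin n) k) :=
  F.image (fakeWeil q n) ∪
    Finset.image (fun i : Fin n => X i ^ q - X (i + 1)) Finset.univ

/-- The weight of a natural number: its digit sum in base `q`. -/
def wNat (q e : ℕ) : ℕ := (Nat.digits q e).sum

/-- The weight of a univariate polynomial: the maximal weight of an exponent appearing in it. -/
def wPoly {k : Type*} [Field k] (q : ℕ) (f : Polynomial k) : ℕ :=
  f.support.sup fun e => wNat q e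

/-! Multiplying the relation `X_i^q - X_{i+1}` of the descent system by a monomial shows that,
inside `V_{E,d}`, any monomial with an exponent `≥ q` may trade `X_i^q` for `X_{i+1}`. Since
`q ≥ 2` this strictly lowers the degree, so every monomial of degree `≤ d` is congruent to one
whose exponents are base-`q` digits, and that monomial is the descent of `X^e` for the number
`e < q^n` with these digits. -/

section Vspace

variable {k σ : Type*} [Field k] {E : Finset (MvPolynomial σ k)} {d : ℕ}

lemma mem_Vspace_of_mem {f : MvPolynomial σ k} (hf : f ∈ E) (hd : f.totalDegree ≤ d) :
    f ∈ Vspace E d :=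
  Submodule.mem_sInf.2 fun _ hW => hW.1 f hf hd

lemma mul_mem_Vspace {g : MvPolynomial σ k} (hg : g ∈ Vspace E d) (h : MvPolynomial σ k)
    (hd : (g * h).totalDegree ≤ d) : g * h ∈ Vspace E d :=
  Submodule.mem_sInf.2 fun W hW => hW.2 g (Submodule.mem_sInf.1 hg W hW) h hd

end Vspace

section FakeWeil

variable {k : Type*} [Field k] (q n : ℕ)

lemma fakeWeil_eq_lsum :
    fakeWeil q n = Polynomial.lsum (R := k) fun e => monomial (expVec q n e) := by
  funext f
  rw [Polynomial.lsum_apply]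
  rfl

lemma fakeWeil_sum {ι : Type*} (s : Finset ι) (f : ι → Polynomial k) :
    fakeWeil q n (∑ i ∈ s, f i) = ∑ i ∈ s, fakeWeil q n (f i) := by
  rw [fakeWeil_eq_lsum]
  exact map_sum _ _ _

lemma fakeWeil_monomial (e : ℕ) (c : k) :
    fakeWeil q n (Polynomial.monomial e c) = monomial (expVec q n e) c := by
  rw [fakeWeil_eq_lsum, Polynomial.lsum_apply,
    Polynomial.sum_monomial_index _ _ (map_zero (monomial (expVec q n e)))]

variable {q n}

lemma exists_expVec_eq {u : Fin n →₀ ℕ} (hu : ∀ j, u j < q) :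
    ∃ e < q ^ n, expVec q n e = u := by
  let e := finFunctionFinEquiv fun j => (⟨u j, hu j⟩ : Fin q)
  refine ⟨e, e.is_lt, Finsupp.ext fun j => ?_⟩
  simp only [expVec, Finsupp.coe_equivFunOnFinite_symm, reduceExp, if_pos e.is_lt]
  rw [← finFunctionFinEquiv_symm_apply_val, Equiv.symm_apply_apply]

lemma exists_fakeWeil_eq_monomial {u : Fin n →₀ ℕ} (hu : ∀ j, u j < q) (c : k) :
    ∃ g : Polynomial k, g.natDegree < q ^ n ∧ fakeWeil q n g = monomial u c := by
  obtain ⟨e, he, heu⟩ := exists_expVec_eq hu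
  exact ⟨Polynomial.monomial e c, (Polynomial.natDegree_monomial_le c).trans_lt he,
    by rw [fakeWeil_monomial, heu]⟩

variable [DecidableEq k] [NeZero n] (F : Finset (Polynomial k)) {d : ℕ}

lemma monomial_sub_monomial_mem_Vspace (hq : 0 < q) (u : Fin n →₀ ℕ) (i : Fin n) (c : k)
    (hd : (u + Finsupp.single i q).degree ≤ d) :
    monomial (u + Finsupp.single i q) c - monomial (u + Finsupp.single (i + 1) 1) c ∈
      Vspace (fakeWeilSystem q n F) d := by
  have hrel : X i ^ q - X (i + 1) ∈ fakeWeilSystem q n F :=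
    Finset.mem_union_right _ (Finset.mem_image_of_mem _ (Finset.mem_univ i))
  have hfactor : (X i ^ q - X (i + 1)) * monomial u c =
      monomial (u + Finsupp.single i q) c - monomial (u + Finsupp.single (i + 1) 1) c := by
    rw [sub_mul, X_pow_eq_monomial, X, monomial_mul, monomial_mul, one_mul,
      add_comm (Finsupp.single i q), add_comm (Finsupp.single (i + 1) 1)]
  simp only [map_add, Finsupp.degree_single] at hd
  have hrel_deg : (X i ^ q - X (i + 1) : MvPolynomial (Fin n) k).totalDegree ≤ d := by
    have := totalDegree_sub (X i ^ q) (X (i + 1) : MvPolynomial (Fin n) k)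
    rw [totalDegree_X_pow, totalDegree_X] at this
    omega
  rw [← hfactor]
  refine mul_mem_Vspace (mem_Vspace_of_mem hrel hrel_deg) _ ?_
  rw [hfactor]
  have hmono (s : Fin n →₀ ℕ) : (monomial s c).totalDegree ≤ s.degree :=
    totalDegree_monomial_le s c
  refine (totalDegree_sub _ _).trans (max_le ((hmono _).trans ?_) ((hmono _).trans ?_)) <;>
    simp only [map_add, Finsupp.degree_single] <;>
    omega

lemma exists_fakeWeil_sub_monomial_mem_Vspace (hq : 2 ≤ q) (u : Fin n →₀ ℕ) (c : k)
    (hd : u.degree ≤ d) : ∃ g : Polynomial k, g.natDegree < q ^ n ∧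
      monomial u c - fakeWeil q n g ∈ Vspace (fakeWeilSystem q n F) d := by
  induction hN : u.degree using Nat.strong_induction_on generalizing u with
  | _ N ih =>
  by_cases hu : ∀ j, u j < q
  · obtain ⟨g, hg, hgu⟩ := exists_fakeWeil_eq_monomial hu c
    exact ⟨g, hg, by rw [hgu, sub_self]; exact zero_mem _⟩
  push Not at hu
  obtain ⟨i, hi⟩ := hu
  obtain ⟨u, rfl⟩ : ∃ u', u = u' + Finsupp.single i q :=
    ⟨_, (tsub_add_cancel_of_le (Finsupp.single_le_iff.2 hi)).symm⟩
  have hlt : (u + Finsupp.single (i + 1) 1).degree < N := by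
    simp only [← hN, map_add, Finsupp.degree_single]
    omega
  obtain ⟨g, hg, hmem⟩ := ih _ hlt _ (hlt.le.trans (hN ▸ hd)) rfl
  refine ⟨g, hg, ?_⟩
  rw [← sub_add_sub_cancel _ (monomial (u + Finsupp.single (i + 1) 1) c)]
  exact add_mem (monomial_sub_monomial_mem_Vspace F (by omega) u i c hd) hmem

end FakeWeil

theorem exists_fakeWeil_equiv_general {k : Type*} [Field k] [DecidableEq k]
    (q n : ℕ) (hq : IsPrimePow q) [NeZero n]
    (F : Finset (Polynomial k)) (h : MvPolynomial (Fin n) k) :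
    ∃ g : Polynomial k, g.natDegree < q ^ n ∧
      h - fakeWeil q n g ∈ Vspace (fakeWeilSystem q n F) h.totalDegree := by
  choose! G hG_deg hG_mem using fun u (hu : u ∈ h.support) =>
    exists_fakeWeil_sub_monomial_mem_Vspace F hq.two_le u (h.coeff u) (le_totalDegree hu)
  refine ⟨∑ u ∈ h.support, G u, ?_, ?_⟩
  · have := Polynomial.natDegree_sum_le_of_forall_le h.support G fun u hu =>
      Nat.le_sub_one_of_lt (hG_deg u hu)
    have := Nat.pos_of_ne_zero (pow_ne_zero n hq.pos.ne')
    omega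
  · have hsplit : h - fakeWeil q n (∑ u ∈ h.support, G u) =
        ∑ u ∈ h.support, (monomial u (h.coeff u) - fakeWeil q n (G u)) := by
      rw [fakeWeil_sum, Finset.sum_sub_distrib, support_sum_monomial_coeff]
    rw [hsplit]
    exact Submodule.sum_mem _ hG_mem

/-- Every `h ∈ S` is congruent, modulo `V_{E, deg h}` with `E = F̄_f`, to the fake Weil
descent of some univariate polynomial `g` of degree less than `q^n`. -/
theorem exists_fakeWeil_equiv {k : Type*} [Field k] [Fintype k] [DecidableEq k]
    (q n : ℕ) (hq : IsPrimePow q) [NeZero n] (hcard : Fintype.card k = q ^ n)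
    (F : Finset (Polynomial k)) (h : MvPolynomial (Fin n) k) :
    ∃ g : Polynomial k, g.natDegree < q ^ n ∧
      h - fakeWeil q n g ∈ Vspace (fakeWeilSystem q n F) h.totalDegree :=
  exists_fakeWeil_equiv_general q n hq F h
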